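/- Let R be a commutative ring, S a multiplicative subset, and M an R-module. Then M is u-S-semisimple (every u-S-short exact sequence with middle term M is u-S-split) if and only if every (ordinary) short exact sequence 0 → L → M → N → 0 is u-S-split. -/

import Mathlib

/-!
A short exact sequence is `u`-`S`-short exact with `s = 1`. Conversely, let `0 → A →f M →g C → 0`
be `u`-`S`-short exact, with `s₁` killing `ker f` and `s₂` moving `ker g` into `range f` and
`range f` into `ker g`. The ordinary sequence `0 → ker g → M → M ⧸ ker g → 0` splits up to some
`t ∈ S`, giving `p : M → ker g` with `p k = t • k`. Since `s₁` kills `ker f` there is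
`ψ : range f → A` with `ψ (f a) = s₁ • a`, and then `ψ ∘ s₂ ∘ p ∘ s₂ : M → A` sends `f a` to
`(s₁ * (s₂ * t * s₂)) • a`.
-/

universe u

/-- `0 → A →f B →g C → 0` is a `u`-`S`-short exact sequence. -/
def IsUSShortExact {R : Type u} [CommRing R] (S : Submonoid R)
    {A B C : Type u} [AddCommGroup A] [Module R A] [AddCommGroup B] [Module R B]
    [AddCommGroup C] [Module R C] (f : A →ₗ[R] B) (g : B →ₗ[R] C) : Prop :=
  (∃ s ∈ S, ∀ x ∈ LinearMap.ker f, s • x = 0) ∧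
  (∃ s ∈ S, (∀ x ∈ LinearMap.ker g, s • x ∈ LinearMap.range f) ∧
            (∀ x ∈ LinearMap.range f, s • x ∈ LinearMap.ker g)) ∧
  (∃ s ∈ S, ∀ y : C, s • y ∈ LinearMap.range g)

open LinearMap Submodule

def IsUSSplit {R A B : Type*} [CommRing R] (S : Submonoid R) [AddCommGroup A] [Module R A]
    [AddCommGroup B] [Module R B] (f : A →ₗ[R] B) : Prop :=
  ∃ s ∈ S, ∃ f' : B →ₗ[R] A, ∀ a : A, f' (f a) = s • a

theorem isUSShortExact_of_exact {R : Type u} [CommRing R] (S : Submonoid R) {A B C : Type u}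
    [AddCommGroup A] [Module R A] [AddCommGroup B] [Module R B] [AddCommGroup C] [Module R C]
    {f : A →ₗ[R] B} {g : B →ₗ[R] C} (hf : Function.Injective f) (hg : Function.Surjective g)
    (hfg : range f = ker g) : IsUSShortExact S f g := by
  refine ⟨⟨1, S.one_mem, fun x hx => ?_⟩, ⟨1, S.one_mem, ?_, ?_⟩, ⟨1, S.one_mem, ?_⟩⟩
  · rw [hf ((mem_ker.mp hx).trans (map_zero f).symm), smul_zero]
  · simp [hfg]
  · simp [hfg]
  · exact fun y => by simpa using hg y

theorem LinearMap.exists_comp_rangeRestrict_eq_smul {R A B : Type*} [CommRing R]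
    [AddCommGroup A] [Module R A] [AddCommGroup B] [Module R B] (f : A →ₗ[R] B) {s : R}
    (hs : ∀ x ∈ ker f, s • x = 0) :
    ∃ ψ : range f →ₗ[R] A, ∀ a, ψ (f.rangeRestrict a) = s • a :=
  ⟨(ker f).liftQ (s • LinearMap.id) (fun x hx => mem_ker.mpr (hs x hx)) ∘ₗ
      f.quotKerEquivRange.symm.toLinearMap,
    fun a => by
      rw [comp_apply, LinearEquiv.coe_coe,
        show f.rangeRestrict a = ⟨f a, mem_range_self f a⟩ from rfl, quotKerEquivRange_symm_apply_image, mkQ_apply, liftQ_apply]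
      rfl⟩

theorem IsUSShortExact.isUSSplit_of_isUSSplit_ker_subtype {R : Type u} [CommRing R]
    {S : Submonoid R} {A M C : Type u} [AddCommGroup A] [Module R A] [AddCommGroup M] [Module R M]
    [AddCommGroup C] [Module R C] {f : A →ₗ[R] M} {g : M →ₗ[R] C} (hfg : IsUSShortExact S f g)
    (hsplit : IsUSSplit S (ker g).subtype) : IsUSSplit S f := by
  obtain ⟨⟨s₁, hs₁, hker_f⟩, ⟨s₂, hs₂, hker_g, hrange_f⟩, -⟩ := hfg
  obtain ⟨t, ht, p, hp⟩ := hsplit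
  obtain ⟨ψ, hψ⟩ := f.exists_comp_rangeRestrict_eq_smul hker_f
  obtain ⟨χ, hχ_coe⟩ : ∃ χ : ker g →ₗ[R] range f, ∀ k, (χ k : M) = s₂ • (k : M) :=
    ⟨codRestrict (range f) (s₂ • (ker g).subtype) fun k => hker_g k k.2, fun _ => rfl⟩
  refine ⟨s₁ * (s₂ * t * s₂), mul_mem hs₁ (mul_mem (mul_mem hs₂ ht) hs₂),
    ψ ∘ₗ χ ∘ₗ p ∘ₗ (s₂ • LinearMap.id), fun a => ?_⟩
  have hfa : s₂ • f a ∈ ker g := hrange_f _ (mem_range_self f a)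
  have hp' : p (s₂ • f a) = t • ⟨s₂ • f a, hfa⟩ := hp ⟨_, hfa⟩
  have hχ : χ (p (s₂ • f a)) = f.rangeRestrict ((s₂ * t * s₂) • a) := by
    ext
    rw [hχ_coe, hp']
    simp [mul_smul]
  change ψ (χ (p (s₂ • f a))) = _
  rw [hχ, hψ, smul_smul]

theorem uS_semisimple_iff_ordinary_sequences_split
    {R : Type u} [CommRing R] (S : Submonoid R)
    (M : Type u) [AddCommGroup M] [Module R M] :
    (∀ (A C : Type u) [AddCommGroup A] [Module R A] [AddCommGroup C] [Module R C]
      (f : A →ₗ[R] M) (g : M →ₗ[R] C), IsUSShortExact S f g →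
      ∃ s ∈ S, ∃ f' : M →ₗ[R] A, ∀ a : A, f' (f a) = s • a) ↔
    (∀ (L N : Type u) [AddCommGroup L] [Module R L] [AddCommGroup N] [Module R N]
      (f : L →ₗ[R] M) (g : M →ₗ[R] N),
      Function.Injective f → Function.Surjective g →
      LinearMap.range f = LinearMap.ker g →
      ∃ s ∈ S, ∃ f' : M →ₗ[R] L, ∀ a : L, f' (f a) = s • a) := by
  constructor
  · intro H L N _ _ _ _ f g hf hg hfg
    exact H L N f g (isUSShortExact_of_exact S hf hg hfg)
  · intro H A C _ _ _ _ f g hfg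
    exact hfg.isUSSplit_of_isUSSplit_ker_subtype <|
      H _ _ (ker g).subtype (ker g).mkQ (injective_subtype _) (mkQ_surjective _)
        (by rw [range_subtype, ker_mkQ])
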